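/- arXiv:2309.10397 — 2 statements merged into one kernel-verified Lean document; each statement's English description precedes it below -/
import Mathlib

section
/- Let k ≥ 1 and let A = ℤ/2kℤ with the quadratic form q(x) = −x²/(2k) mod 2ℤ (discriminant form of ⟨−2k⟩). The group of automorphisms of A preserving q, modulo the subgroup {±id}, has order 2^{ρ(k)−1}, where ρ(k) is the number of distinct prime factors of k. -/
noncomputable def sqOneCard (n : ℕ) : ℕ := Nat.card {x : ZMod n // x ^ 2 = 1}

lemma zmod_natCast_inj {n i j : ℕ} [NeZero n] (hi : i < n) (hj : j < n)
    (h : (i : ZMod n) = (j : ZMod n)) : i = j := by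
  have := congrArg ZMod.val h
  rwa [ZMod.val_cast_of_lt hi, ZMod.val_cast_of_lt hj] at this



lemma sqOneCard_mul {m n : ℕ} (h : m.Coprime n) :
    sqOneCard (m * n) = sqOneCard m * sqOneCard n := by
  have e := ZMod.chineseRemainder h
  rw [sqOneCard, sqOneCard, sqOneCard, ← Nat.card_prod]
  apply Nat.card_congr
  refine Equiv.trans (e.toEquiv.subtypeEquiv (p := fun x => x ^ 2 = 1)
    (q := fun y => y.1 ^ 2 = 1 ∧ y.2 ^ 2 = 1) (fun x => ?_)) (Equiv.subtypeProdEquivProd (p := fun a : ZMod m => a ^ 2 = 1) (q := fun b : ZMod n => b ^ 2 = 1))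
  constructor
  · intro hx
    have : e (x ^ 2) = e 1 := by rw [hx]
    rw [map_pow, map_one] at this
    constructor
    · simpa [Prod.ext_iff] using congrArg Prod.fst this
    · simpa [Prod.ext_iff] using congrArg Prod.snd this
  · intro ⟨h1, h2⟩
    apply e.injective
    rw [map_pow, map_one]
    exact Prod.ext (by simpa using h1) (by simpa using h2)

lemma sqOneCard_one : sqOneCard 1 = 1 := by
  have : Subsingleton {x : ZMod 1 // x ^ 2 = 1} := ⟨fun a b => Subtype.ext (Subsingleton.elim _ _)⟩
  have : Nonempty {x : ZMod 1 // x ^ 2 = 1} := ⟨⟨1, one_pow 2⟩⟩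
  exact Nat.card_eq_one_iff_unique.mpr ⟨‹_›, ‹_›⟩


lemma zmod_sq_one_nat_dvd {n : ℕ} [NeZero n] (hn : 1 < n) {x : ZMod n} (hx : x ^ 2 = 1) :
    1 ≤ x.val ∧ x.val < n ∧ n ∣ (x.val - 1) * (x.val + 1) := by
  haveI : Fact (1 < n) := ⟨hn⟩
  have hx1 : ((x.val : ℕ) : ZMod n) = x := ZMod.natCast_zmod_val x
  have hvlt : x.val < n := ZMod.val_lt x
  have hv1 : 1 ≤ x.val := by
    rcases Nat.eq_zero_or_pos x.val with h | h
    · exfalso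
      rw [h] at hx1
      rw [← hx1] at hx
      simp at hx
    · exact h
  refine ⟨hv1, hvlt, ?_⟩
  have h2 : ((x.val ^ 2 - 1 : ℕ) : ZMod n) = 0 := by
    rw [Nat.cast_sub (Nat.one_le_pow _ _ (by omega)), Nat.cast_pow, hx1, Nat.cast_one, hx, sub_self]
  have h3 : n ∣ x.val ^ 2 - 1 := (ZMod.natCast_eq_zero_iff _ _).mp h2
  have h4 : x.val ^ 2 - 1 = (x.val - 1) * (x.val + 1) := by
    obtain ⟨w, hw⟩ : ∃ w, x.val = w + 1 := ⟨x.val - 1, by omega⟩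
    rw [hw]
    have : (w + 1) ^ 2 = w * (w + 2) + 1 := by ring
    simp [this]
  rwa [h4] at h3

lemma sqOne_set_odd_pp {p a : ℕ} (hp : p.Prime) (hp2 : p ≠ 2) (ha : 0 < a) :
    {x : ZMod (p ^ a) | x ^ 2 = 1} = {1, -1} := by
  have hp3 : 3 ≤ p := by have := hp.two_le; omega
  have hn1 : 1 < p ^ a := Nat.one_lt_pow (by omega) (by omega)
  haveI : NeZero (p ^ a) := ⟨by positivity⟩
  ext x
  simp only [Set.mem_setOf_eq, Set.mem_insert_iff, Set.mem_singleton_iff]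
  constructor
  · intro hx
    obtain ⟨hv1, hvlt, hdvd⟩ := zmod_sq_one_nat_dvd hn1 hx
    have hx1 : ((x.val : ℕ) : ZMod (p ^ a)) = x := ZMod.natCast_zmod_val x
    have hnot : ¬ p ∣ (x.val - 1) ∨ ¬ p ∣ (x.val + 1) := by
      by_contra hc
      push_neg at hc
      have hd2 : p ∣ 2 := by
        have h2 := Nat.dvd_sub hc.2 hc.1
        have he : x.val + 1 - (x.val - 1) = 2 := by omega
        rwa [he] at h2
      have := Nat.le_of_dvd (by norm_num) hd2
      omega
    have key : p ^ a ∣ x.val - 1 ∨ p ^ a ∣ x.val + 1 := by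
      rcases hnot with h | h
      · exact Or.inr ((Nat.Coprime.pow_left a (hp.coprime_iff_not_dvd.mpr h)).dvd_of_dvd_mul_left hdvd)
      · exact Or.inl ((Nat.Coprime.pow_left a (hp.coprime_iff_not_dvd.mpr h)).dvd_of_dvd_mul_right hdvd)
    rcases key with h | h
    · left
      have : x.val - 1 = 0 := Nat.eq_zero_of_dvd_of_lt h (by omega)
      have hv : x.val = 1 := by omega
      rw [← hx1, hv, Nat.cast_one]
    · right
      have hle : p ^ a ≤ x.val + 1 := Nat.le_of_dvd (by omega) h
      have hv : x.val + 1 = p ^ a := by omega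
      rw [← hx1]
      have h0 : ((x.val : ZMod (p ^ a))) + 1 = 0 := by
        rw [← Nat.cast_one, ← Nat.cast_add, hv, ZMod.natCast_self]
      exact eq_neg_of_add_eq_zero_left h0
  · rintro (rfl | rfl)
    · exact one_pow 2
    · exact neg_one_sq

lemma sqOne_set_two_pow {a : ℕ} (ha : 3 ≤ a) :
    {x : ZMod (2 ^ a) | x ^ 2 = 1} =
      {1, -1, ((2 ^ (a - 1) : ℕ) : ZMod (2 ^ a)) - 1, ((2 ^ (a - 1) : ℕ) : ZMod (2 ^ a)) + 1} := by
  have hn1 : 1 < 2 ^ a := Nat.one_lt_pow (by omega) (by omega)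
  haveI : NeZero (2 ^ a) := ⟨by positivity⟩
  set c : ZMod (2 ^ a) := ((2 ^ (a - 1) : ℕ) : ZMod (2 ^ a)) with hc
  have hpow : 2 ^ (a - 1) * 2 = 2 ^ a := by
    rw [← pow_succ]; congr 1; omega
  have h2c : (2 : ZMod (2 ^ a)) * c = 0 := by
    rw [hc, show ((2 : ZMod (2 ^ a))) = ((2 : ℕ) : ZMod (2 ^ a)) by norm_cast,
      ← Nat.cast_mul, mul_comm, hpow, ZMod.natCast_self]
  have hc2 : c ^ 2 = 0 := by
    rw [hc, ← Nat.cast_pow]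
    have : (2 ^ (a - 1)) ^ 2 = 2 ^ a * 2 ^ (a - 2) := by
      rw [← pow_mul, ← pow_add]; congr 1; omega
    rw [this, Nat.cast_mul, ZMod.natCast_self, zero_mul]
  ext x
  simp only [Set.mem_setOf_eq, Set.mem_insert_iff, Set.mem_singleton_iff]
  constructor
  · intro hx
    have hx1 : ((x.val : ℕ) : ZMod (2 ^ a)) = x := ZMod.natCast_zmod_val x
    obtain ⟨hv1, hvlt, hdvd⟩ : 1 ≤ x.val ∧ x.val < 2 ^ a ∧ 2 ^ a ∣ (x.val - 1) * (x.val + 1) := by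
      haveI : Fact (1 < 2 ^ a) := ⟨hn1⟩
      have hx2 : ((x.val ^ 2 - 1 : ℕ) : ZMod (2 ^ a)) = 0 := by
        have hge : 1 ≤ x.val := by
          rcases Nat.eq_zero_or_pos x.val with h | h
          · exfalso; rw [h] at hx1; rw [← hx1] at hx; simp at hx
          · exact h
        rw [Nat.cast_sub (Nat.one_le_pow _ _ (by omega)), Nat.cast_pow, hx1, Nat.cast_one, hx,
          sub_self]
      have h3 : 2 ^ a ∣ x.val ^ 2 - 1 := (ZMod.natCast_eq_zero_iff _ _).mp hx2
      have hge : 1 ≤ x.val := by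
        rcases Nat.eq_zero_or_pos x.val with h | h
        · exfalso; rw [h] at hx1; rw [← hx1] at hx; simp at hx
        · exact h
      refine ⟨hge, ZMod.val_lt x, ?_⟩
      have h4 : x.val ^ 2 - 1 = (x.val - 1) * (x.val + 1) := by
        obtain ⟨w, hw⟩ : ∃ w, x.val = w + 1 := ⟨x.val - 1, by omega⟩
        rw [hw]
        have : (w + 1) ^ 2 = w * (w + 2) + 1 := by ring
        simp [this]
      rwa [h4] at h3
    -- x.val is odd
    have hodd : ¬ 2 ∣ x.val := by
      intro he
      have h1 : ¬ 2 ∣ (x.val - 1) * (x.val + 1) := by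
        intro h2
        rcases (Nat.Prime.dvd_mul Nat.prime_two).mp h2 with h | h <;> omega
      exact h1 (dvd_trans (dvd_pow_self 2 (by omega)) hdvd)
    obtain ⟨s, hs⟩ : ∃ s, x.val = 2 * s + 1 := ⟨x.val / 2, by omega⟩
    have hdvd2 : 2 ^ (a - 2) ∣ s * (s + 1) := by
      have h4 : (2 : ℕ) ^ 2 * 2 ^ (a - 2) ∣ 2 ^ 2 * (s * (s + 1)) := by
        have e1 : (2 : ℕ) ^ 2 * 2 ^ (a - 2) = 2 ^ a := by rw [← pow_add]; congr 1; omega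
        have e2 : (2 : ℕ) ^ 2 * (s * (s + 1)) = (x.val - 1) * (x.val + 1) := by
          rw [hs]
          have e3 : 2 * s + 1 - 1 = 2 * s := by omega
          rw [e3]; ring
        rw [e1, e2]; exact hdvd
      exact (mul_dvd_mul_iff_left (by positivity : (2:ℕ)^2 ≠ 0)).mp h4
    have key : 2 ^ (a - 1) ∣ x.val - 1 ∨ 2 ^ (a - 1) ∣ x.val + 1 := by
      rcases Nat.even_or_odd s with he | ho
      · -- s even, s+1 odd, so 2^(a-2) ∣ s
        left
        have hcop : Nat.Coprime (2 ^ (a - 2)) (s + 1) := by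
          apply Nat.Coprime.pow_left
          rw [Nat.prime_two.coprime_iff_not_dvd]
          intro h; obtain ⟨t, ht⟩ := he; omega
        have h5 : 2 ^ (a - 2) ∣ s := hcop.dvd_of_dvd_mul_right hdvd2
        obtain ⟨t, ht⟩ := h5
        refine ⟨t, ?_⟩
        have e : 2 * 2 ^ (a - 2) = 2 ^ (a - 1) := by rw [← pow_succ']; congr 1; omega
        calc x.val - 1 = 2 * s := by omega
          _ = 2 ^ (a - 1) * t := by rw [ht, ← mul_assoc, e]
      · right
        have hcop : Nat.Coprime (2 ^ (a - 2)) s := by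
          apply Nat.Coprime.pow_left
          rw [Nat.prime_two.coprime_iff_not_dvd]
          intro h; obtain ⟨t, ht⟩ := ho; omega
        have h5 : 2 ^ (a - 2) ∣ s + 1 := hcop.dvd_of_dvd_mul_left hdvd2
        obtain ⟨t, ht⟩ := h5
        refine ⟨t, ?_⟩
        have e : 2 * 2 ^ (a - 2) = 2 ^ (a - 1) := by rw [← pow_succ']; congr 1; omega
        calc x.val + 1 = 2 * (s + 1) := by omega
          _ = 2 ^ (a - 1) * t := by rw [ht, ← mul_assoc, e]
    have hpow2 : 2 ^ (a - 1) * 2 = 2 ^ a := hpow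
    rcases key with ⟨t, ht⟩ | ⟨t, ht⟩
    · have htlt : t < 2 := by
        have hm : 2 ^ (a - 1) * t < 2 ^ (a - 1) * 2 := by omega
        exact Nat.lt_of_mul_lt_mul_left hm
      interval_cases t
      · left
        have : x.val = 1 := by omega
        rw [← hx1, this, Nat.cast_one]
      · right; right; right
        have : x.val = 2 ^ (a - 1) + 1 := by omega
        rw [← hx1, this, Nat.cast_add, Nat.cast_one]
    · have ht1 : 1 ≤ t := by
        rcases Nat.eq_zero_or_pos t with h | h
        · exfalso; rw [h, mul_zero] at ht; omega
        · exact h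
      have htle : t ≤ 2 := by
        have hm : 2 ^ (a - 1) * t ≤ 2 ^ (a - 1) * 2 := by omega
        exact Nat.le_of_mul_le_mul_left hm (by positivity)
      interval_cases t
      · right; right; left
        have : x.val = 2 ^ (a - 1) - 1 := by omega
        rw [← hx1, this, Nat.cast_sub (Nat.one_le_pow _ _ (by omega)), Nat.cast_one]
      · right; left
        have h0 : ((x.val : ZMod (2 ^ a))) + 1 = 0 := by
          rw [← Nat.cast_one, ← Nat.cast_add]
          have : x.val + 1 = 2 ^ a := by omega
          rw [this, ZMod.natCast_self]
        rw [← hx1]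
        exact eq_neg_of_add_eq_zero_left h0
  · rintro (rfl | rfl | rfl | rfl)
    · exact one_pow 2
    · exact neg_one_sq
    · have : (c - 1) ^ 2 = c ^ 2 - 2 * c + 1 := by ring
      rw [this, hc2, h2c]; ring
    · have : (c + 1) ^ 2 = c ^ 2 + 2 * c + 1 := by ring
      rw [this, hc2, h2c]; ring








lemma sqOneCard_eq_ncard (n : ℕ) :
    sqOneCard n = ({x : ZMod n | x ^ 2 = 1} : Set (ZMod n)).ncard := Nat.card_coe_set_eq _

lemma sqOneCard_odd_pp {p a : ℕ} (hp : p.Prime) (hp2 : p ≠ 2) (ha : 0 < a) :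
    sqOneCard (p ^ a) = 2 := by
  have hp3 : 3 ≤ p := by have := hp.two_le; omega
  have hn2 : 2 < p ^ a := by
    calc 2 < 3 := by omega
    _ ≤ p := hp3
    _ = p ^ 1 := (pow_one p).symm
    _ ≤ p ^ a := Nat.pow_le_pow_right (by omega) ha
  haveI : Fact (2 < p ^ a) := ⟨hn2⟩
  haveI : NeZero (p ^ a) := ⟨by positivity⟩
  rw [sqOneCard_eq_ncard, sqOne_set_odd_pp hp hp2 ha]
  exact Set.ncard_pair (Ne.symm ZMod.neg_one_ne_one)

lemma sqOneCard_four : sqOneCard 4 = 2 := by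
  rw [sqOneCard, Nat.card_eq_fintype_card]
  decide

lemma sqOneCard_two_pow {a : ℕ} (ha : 3 ≤ a) : sqOneCard (2 ^ a) = 4 := by
  haveI : NeZero (2 ^ a) := ⟨by positivity⟩
  have h1a : 2 ≤ 2 ^ (a - 1) := by
    calc 2 = 2 ^ 1 := (pow_one 2).symm
    _ ≤ 2 ^ (a - 1) := Nat.pow_le_pow_right (by omega) (by omega)
  have hpow : 2 ^ (a - 1) * 2 = 2 ^ a := by rw [← pow_succ]; congr 1; omega
  have e1 : (1 : ZMod (2 ^ a)) = ((1 : ℕ) : ZMod (2 ^ a)) := by norm_cast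
  have e2 : (-1 : ZMod (2 ^ a)) = ((2 ^ a - 1 : ℕ) : ZMod (2 ^ a)) := by
    rw [Nat.cast_sub (Nat.one_le_two_pow), ZMod.natCast_self, Nat.cast_one, zero_sub]
  have e3 : ((2 ^ (a - 1) : ℕ) : ZMod (2 ^ a)) - 1 = ((2 ^ (a - 1) - 1 : ℕ) : ZMod (2 ^ a)) := by
    rw [Nat.cast_sub (by omega), Nat.cast_one]
  have e4 : ((2 ^ (a - 1) : ℕ) : ZMod (2 ^ a)) + 1 = ((2 ^ (a - 1) + 1 : ℕ) : ZMod (2 ^ a)) := by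
    push_cast; ring
  have h4 : 4 ≤ 2 ^ (a - 1) := by
    calc (4:ℕ) = 2 ^ 2 := by norm_num
    _ ≤ 2 ^ (a - 1) := Nat.pow_le_pow_right (by omega) (by omega)
  have hinj : ∀ i j : ℕ, i < 2 ^ a → j < 2 ^ a → ¬ i = j →
      ¬ ((i : ZMod (2 ^ a)) = (j : ZMod (2 ^ a))) :=
    fun i j hi hj hij h => hij (zmod_natCast_inj hi hj h)
  rw [sqOneCard_eq_ncard, sqOne_set_two_pow ha, e2, e3, e4, e1]
  rw [Set.ncard_insert_of_notMem ?h1 (Set.toFinite _),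
    Set.ncard_insert_of_notMem ?h2 (Set.toFinite _),
    Set.ncard_insert_of_notMem ?h3 (Set.toFinite _), Set.ncard_singleton]
  case h1 =>
    simp only [Set.mem_insert_iff, Set.mem_singleton_iff]
    push_neg
    exact ⟨hinj _ _ (by omega) (by omega) (by omega), hinj _ _ (by omega) (by omega) (by omega),
      hinj _ _ (by omega) (by omega) (by omega)⟩
  case h2 =>
    simp only [Set.mem_insert_iff, Set.mem_singleton_iff]
    push_neg
    exact ⟨hinj _ _ (by omega) (by omega) (by omega), hinj _ _ (by omega) (by omega) (by omega)⟩
  case h3 =>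
    simp only [Set.mem_singleton_iff]
    exact hinj _ _ (by omega) (by omega) (by omega)

lemma sqOneCard_odd : ∀ {m : ℕ}, Odd m → sqOneCard m = 2 ^ m.primeFactors.card := by
  intro m
  induction m using Nat.recOnPosPrimePosCoprime with
  | prime_pow p n hp hn =>
    intro hm
    have hp' : p.Prime := hp
    have hp2 : p ≠ 2 := by
      rintro rfl
      rw [Nat.odd_iff] at hm
      have : 2 ∣ 2 ^ n := dvd_pow_self 2 (by omega)
      omega
    rw [sqOneCard_odd_pp hp' hp2 hn, Nat.primeFactors_prime_pow (by omega) hp',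
      Finset.card_singleton, pow_one]
  | zero => intro hm; simp [Nat.odd_iff] at hm
  | one => intro _; simp [sqOneCard_one]
  | coprime a b ha hb hab iha ihb =>
    intro hm
    rw [Nat.odd_mul] at hm
    rw [sqOneCard_mul hab, iha hm.1, ihb hm.2, ← pow_add,
      Nat.primeFactors_mul (by omega) (by omega),
      Finset.card_union_of_disjoint (Nat.Coprime.disjoint_primeFactors hab)]

lemma sqOneCard_four_mul {k : ℕ} (hk : 0 < k) :
    sqOneCard (4 * k) = 2 * 2 ^ k.primeFactors.card := by
  set b := k.factorization 2 with hb
  set m := k / 2 ^ b with hm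
  have hsplit : 2 ^ b * m = k := Nat.ordProj_mul_ordCompl_eq_self k 2
  have hm0 : 0 < m := Nat.ordCompl_pos 2 (by omega)
  have hnd : ¬ 2 ∣ m := Nat.not_dvd_ordCompl Nat.prime_two (by omega)
  have hmodd : Odd m := Nat.odd_iff.mpr (by omega)
  have hcop : Nat.Coprime (2 ^ (b + 2)) m :=
    Nat.Coprime.pow_left _ (Nat.prime_two.coprime_iff_not_dvd.mpr hnd)
  have h4k : 4 * k = 2 ^ (b + 2) * m := by
    rw [← hsplit]; ring
  rw [h4k, sqOneCard_mul hcop, sqOneCard_odd hmodd]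
  rcases Nat.eq_zero_or_pos b with hb0 | hb1
  · have hkm : k = m := by rw [← hsplit, hb0]; simp
    rw [hb0, hkm]
    norm_num [sqOneCard_four]
  · have h3 : 3 ≤ b + 2 := by omega
    rw [sqOneCard_two_pow h3]
    have hpf : k.primeFactors = insert 2 m.primeFactors := by
      rw [← hsplit, Nat.primeFactors_mul (by positivity) (by omega),
        Nat.primeFactors_prime_pow (by omega) Nat.prime_two]
      simp only [Finset.insert_eq]
    rw [hpf, Finset.card_insert_of_notMem (by
      intro hc
      exact hnd (Nat.dvd_of_mem_primeFactors hc))]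
    ring





/-- for `k ≥ 1`, the group of automorphisms of `A = ℤ/2kℤ` preserving the
discriminant quadratic form `q(x) = −x²/2k mod 2ℤ` of `⟨−2k⟩`, modulo `{±id}`, has
order `2^(ρ(k)−1)`, where `ρ(k)` is the number of distinct primes dividing `k`.
An automorphism of `A` is multiplication by a unit `u ∈ (ℤ/2kℤ)ˣ`, and it preserves
`q` iff `u² ≡ 1 (mod 4k)`; so the claim is
`#({u ∈ (ℤ/2kℤ)ˣ : u² ≡ 1 mod 4k} / {±1}) = 2^(ρ(k)−1)`. -/
theorem discriminant_isometries_mod_pm_card (k : ℕ) (hk : 0 < k) :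
    Nat.card
      (Quot (fun u v : {u : (ZMod (2 * k))ˣ //
          (4 * (k : ℤ)) ∣ (((u : ZMod (2 * k)).val : ℤ) ^ 2 - 1)} =>
        u.1 = v.1 ∨ u.1 = -v.1)) = 2 ^ (k.primeFactors.card - 1) := by
  set r := (fun u v : {u : (ZMod (2 * k))ˣ //
          (4 * (k : ℤ)) ∣ (((u : ZMod (2 * k)).val : ℤ) ^ 2 - 1)} =>
        u.1 = v.1 ∨ u.1 = -v.1) with hr
  rcases Nat.lt_or_ge k 2 with hk1 | hk2
  · -- k = 1
    have hk1' : k = 1 := by omega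
    subst hk1'
    haveI : Fact (1 < 2 * 1) := ⟨by norm_num⟩
    haveI us : Subsingleton ((ZMod (2 * 1))ˣ) := ⟨by decide⟩
    haveI sub1 : Subsingleton {u : (ZMod (2 * 1))ˣ //
        (4 * ((1:ℕ) : ℤ)) ∣ (((u : ZMod (2 * 1)).val : ℤ) ^ 2 - 1)} := by
      constructor
      intro a b
      apply Subtype.ext
      apply Subsingleton.elim
    have hne : Nonempty {u : (ZMod (2 * 1))ˣ //
        (4 * ((1:ℕ) : ℤ)) ∣ (((u : ZMod (2 * 1)).val : ℤ) ^ 2 - 1)} := by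
      refine ⟨⟨1, ?_⟩⟩
      have : ((1 : (ZMod (2 * 1))ˣ) : ZMod (2 * 1)).val = 1 := ZMod.val_one _
      rw [this]
      norm_num
    haveI : Subsingleton (Quot r) := by
      constructor
      intro a b
      induction a using Quot.ind with | _ a =>
      induction b using Quot.ind with | _ b =>
      rw [Subsingleton.elim a b]
    haveI hqn : Nonempty (Quot r) := ⟨Quot.mk r hne.some⟩
    simp only [Nat.primeFactors_one, Finset.card_empty]
    norm_num
  · -- main case k ≥ 2
    haveI hne2 : NeZero (2 * k) := ⟨by omega⟩
    haveI hne4 : NeZero (4 * k) := ⟨by omega⟩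
    haveI : Fact (1 < 2 * k) := ⟨by omega⟩
    haveI : Fact (2 < 2 * k) := ⟨by omega⟩
    haveI : Fact (1 < 4 * k) := ⟨by omega⟩
    have hdvd : 2 * k ∣ 4 * k := ⟨2, by ring⟩
    set H : Subgroup (ZMod (4 * k))ˣ :=
      (powMonoidHom 2 : (ZMod (4 * k))ˣ →* (ZMod (4 * k))ˣ).ker with hH
    set f : ↥H →* (ZMod (2 * k))ˣ := (ZMod.unitsMap hdvd).comp H.subtype with hf
    -- membership in H means square of value is 1
    have memH : ∀ u : (ZMod (4 * k))ˣ, u ∈ H ↔ ((u : ZMod (4 * k)) ^ 2 = 1) := by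
      intro u
      rw [hH, MonoidHom.mem_ker, powMonoidHom_apply]
      constructor
      · intro h
        have := congrArg (Units.val) h
        rwa [Units.val_pow_eq_pow_val] at this
      · intro h
        ext
        rwa [Units.val_pow_eq_pow_val]
    -- value of f
    have fval : ∀ x : ↥H, ((f x : (ZMod (2 * k))ˣ) : ZMod (2 * k)) =
        ZMod.castHom hdvd (ZMod (2 * k)) ((x : (ZMod (4 * k))ˣ) : ZMod (4 * k)) := fun x => rfl
    -- card H = sqOneCard (4k)
    have cardH : Nat.card ↥H = sqOneCard (4 * k) := by
      rw [sqOneCard]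
      apply Nat.card_congr
      exact {
        toFun := fun u => ⟨((u : (ZMod (4 * k))ˣ) : ZMod (4 * k)), (memH _).mp u.2⟩
        invFun := fun x => ⟨⟨x.1, x.1, by rw [← sq]; exact x.2, by rw [← sq]; exact x.2⟩,
          (memH _).mpr x.2⟩
        left_inv := fun u => Subtype.ext (Units.ext rfl)
        right_inv := fun x => rfl }
    -- the nontrivial kernel element
    have hval1sq : (((2 * k + 1 : ℕ) : ZMod (4 * k))) * ((2 * k + 1 : ℕ) : ZMod (4 * k)) = 1 := by
      rw [← Nat.cast_mul]
      have : (2 * k + 1) * (2 * k + 1) = 4 * k * (k + 1) + 1 := by ring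
      rw [this, Nat.cast_add, Nat.cast_mul, ZMod.natCast_self, zero_mul, zero_add, Nat.cast_one]
    set u1 : (ZMod (4 * k))ˣ :=
      ⟨((2 * k + 1 : ℕ) : ZMod (4 * k)), ((2 * k + 1 : ℕ) : ZMod (4 * k)), hval1sq, hval1sq⟩
      with hu1
    have hu1H : u1 ∈ H := by
      rw [memH]
      rw [sq]
      exact hval1sq
    set w : ↥H := ⟨u1, hu1H⟩ with hw
    -- kernel of f is {1, w}
    have kerset : (f.ker : Set ↥H) = {1, w} := by
      ext x
      simp only [SetLike.mem_coe, MonoidHom.mem_ker, Set.mem_insert_iff, Set.mem_singleton_iff]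
      constructor
      · intro hx
        have hx2 : ((x : (ZMod (4 * k))ˣ) : ZMod (4 * k)) ^ 2 = 1 := (memH _).mp x.2
        obtain ⟨ha1, halt, -⟩ := zmod_sq_one_nat_dvd (Fact.out : 1 < 4 * k) hx2
        set a := ((x : (ZMod (4 * k))ˣ) : ZMod (4 * k)).val with hadef
        have hcast : ((a : ℕ) : ZMod (4 * k)) = ((x : (ZMod (4 * k))ˣ) : ZMod (4 * k)) :=
          ZMod.natCast_zmod_val _
        have hfval : ((f x : (ZMod (2 * k))ˣ) : ZMod (2 * k)) = 1 := by rw [hx]; rfl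
        rw [fval, ← hcast, map_natCast] at hfval
        have hmod : a % (2 * k) = 1 := by
          have := congrArg ZMod.val hfval
          rwa [ZMod.val_natCast, ZMod.val_one] at this
        have hdm := Nat.div_add_mod a (2 * k)
        set t := a / (2 * k) with htdef
        have ht2 : t < 2 := by
          by_contra hcon
          push_neg at hcon
          have : 2 * k * 2 ≤ 2 * k * t := Nat.mul_le_mul_left _ hcon
          omega
        interval_cases t
        · left
          have ha : a = 1 := by omega
          apply Subtype.ext
          apply Units.ext
          rw [← hcast, ha, Nat.cast_one]
          rfl
        · right
          have ha : a = 2 * k + 1 := by omega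
          apply Subtype.ext
          apply Units.ext
          rw [← hcast, ha]
      · rintro (rfl | rfl)
        · exact map_one f
        · apply Units.ext
          rw [fval]
          show ZMod.castHom hdvd (ZMod (2 * k)) (((2 * k + 1 : ℕ) : ZMod (4 * k))) = 1
          rw [map_natCast]
          have e5 : ((2 * k + 1 : ℕ) : ZMod (2 * k)) = ((2 * k : ℕ) : ZMod (2 * k)) + 1 := by
            push_cast; ring
          rw [e5, ZMod.natCast_self, zero_add]
        
    have hw1 : (1 : ↥H) ≠ w := by
      intro hc
      have h3 : (((2 * k + 1 : ℕ) : ZMod (4 * k))).val = 2 * k + 1 :=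
        ZMod.val_cast_of_lt (by omega)
      have h2 : ((((1 : ↥H) : (ZMod (4 * k))ˣ)) : ZMod (4 * k)).val = 1 := by
        rw [OneMemClass.coe_one, Units.val_one, ZMod.val_one]
      have h4 : ((((w : (ZMod (4 * k))ˣ)) : ZMod (4 * k))).val = 2 * k + 1 := h3
      rw [hc, h4] at h2
      omega
    have cardKer : Nat.card f.ker = 2 := by
      have h1 : Nat.card f.ker = (f.ker : Set ↥H).ncard := Nat.card_coe_set_eq _
      rw [h1, kerset, Set.ncard_pair hw1]
    -- range characterization
    have hrange : ∀ u : (ZMod (2 * k))ˣ,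
        ((4 * (k : ℤ)) ∣ (((u : ZMod (2 * k)).val : ℤ) ^ 2 - 1)) ↔ u ∈ f.range := by
      intro u
      constructor
      · intro hu
        set a := (u : ZMod (2 * k)).val with hadef
        have hx2 : ((a : ℕ) : ZMod (4 * k)) ^ 2 = 1 := by
          have h0 : (((a : ℤ) ^ 2 - 1 : ℤ) : ZMod (4 * k)) = 0 := by
            rw [ZMod.intCast_zmod_eq_zero_iff_dvd]
            push_cast
            exact_mod_cast hu
          push_cast at h0
          rwa [sub_eq_zero] at h0
        have hmul : ((a : ℕ) : ZMod (4 * k)) * ((a : ℕ) : ZMod (4 * k)) = 1 := by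
          rw [← sq]; exact hx2
        set xu : (ZMod (4 * k))ˣ := ⟨((a : ℕ) : ZMod (4 * k)), ((a : ℕ) : ZMod (4 * k)), hmul, hmul⟩
          with hxu
        have hxuH : xu ∈ H := (memH _).mpr hx2
        refine ⟨⟨xu, hxuH⟩, ?_⟩
        apply Units.ext
        rw [fval]
        show ZMod.castHom hdvd (ZMod (2 * k)) ((a : ℕ) : ZMod (4 * k)) = _
        rw [map_natCast]
        exact ZMod.natCast_zmod_val _
      · rintro ⟨x, rfl⟩
        set b := ((x : (ZMod (4 * k))ˣ) : ZMod (4 * k)).val with hbdef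
        have hx2 : ((x : (ZMod (4 * k))ˣ) : ZMod (4 * k)) ^ 2 = 1 := (memH _).mp x.2
        have hint : (4 * (k : ℤ)) ∣ (b : ℤ) ^ 2 - 1 := by
          have h0 : (((b : ℤ) ^ 2 - 1 : ℤ) : ZMod (4 * k)) = 0 := by
            push_cast
            rw [sub_eq_zero, ZMod.natCast_zmod_val, hx2]
          rw [ZMod.intCast_zmod_eq_zero_iff_dvd] at h0
          exact_mod_cast h0
        have hfv : ((f x : (ZMod (2 * k))ˣ) : ZMod (2 * k)).val = b % (2 * k) := by
          rw [fval, ← ZMod.natCast_zmod_val ((x : (ZMod (4 * k))ˣ) : ZMod (4 * k)), map_natCast,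
            ZMod.val_natCast]
        rw [hfv]
        have hqr : (b : ℤ) = 2 * k * ((b / (2 * k) : ℕ) : ℤ) + ((b % (2 * k) : ℕ) : ℤ) := by
          exact_mod_cast congrArg (Nat.cast : ℕ → ℤ) (Nat.div_add_mod b (2 * k)).symm
        have hkey : ((b % (2 * k) : ℕ) : ℤ) ^ 2 - 1 = ((b : ℤ) ^ 2 - 1) -
            (4 * (k : ℤ)) * (((b / (2 * k) : ℕ) : ℤ) * (b : ℤ) -
              (k : ℤ) * ((b / (2 * k) : ℕ) : ℤ) ^ 2) := by
          rw [hqr]; push_cast; ring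
        rw [hkey]
        exact dvd_sub hint ⟨_, rfl⟩
    set K := f.range with hK
    have hnegK : (-1 : (ZMod (2 * k))ˣ) ∈ K := by
      have hmem : (-1 : (ZMod (4 * k))ˣ) ∈ H := by
        rw [memH]
        rw [Units.val_neg, Units.val_one, neg_one_sq]
      refine ⟨⟨-1, hmem⟩, ?_⟩
      apply Units.ext
      rw [fval]
      show ZMod.castHom hdvd (ZMod (2 * k)) (((-1 : (ZMod (4 * k))ˣ)) : ZMod (4 * k)) =
        ((-1 : (ZMod (2 * k))ˣ) : ZMod (2 * k))
      rw [Units.val_neg, Units.val_one, map_neg, map_one, Units.val_neg, Units.val_one]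
    set g : ↥K := ⟨-1, hnegK⟩ with hgdef
    have hg2 : g ^ 2 = 1 := by
      apply Subtype.ext
      show ((g : (ZMod (2 * k))ˣ)) ^ 2 = 1
      show (-1 : (ZMod (2 * k))ˣ) ^ 2 = 1
      rw [sq, neg_one_mul, neg_neg]
    have hzmem : ∀ x : ↥K, x ∈ Subgroup.zpowers g → x = 1 ∨ x = g := by
      rintro x hx
      obtain ⟨n, hn⟩ := Subgroup.mem_zpowers_iff.mp hx
      have hz2 : g ^ (2 : ℤ) = 1 := by
        rw [show (2 : ℤ) = ((2 : ℕ) : ℤ) by norm_num, zpow_natCast, hg2]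
      rcases Int.even_or_odd n with ⟨m, hm⟩ | ⟨m, hm⟩
      · left
        rw [← hn, hm, show m + m = 2 * m by ring, zpow_mul, hz2, one_zpow]
      · right
        rw [← hn, hm, zpow_add, zpow_mul, hz2, one_zpow, one_mul, zpow_one]
    have hgne1 : g ≠ 1 := by
      intro hc
      have hu : (-1 : (ZMod (2 * k))ˣ) = 1 := congrArg Subtype.val hc
      have := congrArg Units.val hu
      rw [Units.val_neg, Units.val_one] at this
      exact ZMod.neg_one_ne_one this
    have zset : ((Subgroup.zpowers g : Subgroup ↥K) : Set ↥K) = {1, g} := by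
      ext x
      simp only [SetLike.mem_coe, Set.mem_insert_iff, Set.mem_singleton_iff]
      constructor
      · exact hzmem x
      · rintro (rfl | rfl)
        · exact Subgroup.one_mem _
        · exact Subgroup.mem_zpowers g
    have cardZ : Nat.card (Subgroup.zpowers g) = 2 := by
      have h1 : Nat.card (Subgroup.zpowers g) =
          ((Subgroup.zpowers g : Subgroup ↥K) : Set ↥K).ncard := Nat.card_coe_set_eq _
      rw [h1, zset, Set.ncard_pair (Ne.symm hgne1)]
    set e : {u : (ZMod (2 * k))ˣ //
        (4 * (k : ℤ)) ∣ (((u : ZMod (2 * k)).val : ℤ) ^ 2 - 1)} ≃ ↥K :=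
      Equiv.subtypeEquivRight hrange with he
    have hFsound : ∀ u v, r u v →
        (QuotientGroup.mk (e u) : ↥K ⧸ Subgroup.zpowers g) = QuotientGroup.mk (e v) := by
      intro u v huv
      rcases huv with h | h
      · exact congrArg _ (congrArg e (Subtype.ext h))
      · have heu : e u = g * e v := by
          apply Subtype.ext
          show (u : (ZMod (2 * k))ˣ) = ((g * e v : ↥K) : (ZMod (2 * k))ˣ)
          rw [h]
          show -(v.1) = (-1) * (v.1)
          rw [neg_one_mul]
        rw [heu]
        apply (QuotientGroup.eq).mpr
        have hcomp : (g * e v)⁻¹ * (e v) = g⁻¹ := by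
          rw [mul_inv_rev, mul_comm ((e v)⁻¹) g⁻¹, mul_assoc, inv_mul_cancel, mul_one]
        rw [hcomp]
        exact Subgroup.inv_mem _ (Subgroup.mem_zpowers g)
    have hGsound : ∀ x y : ↥K, (QuotientGroup.leftRel (Subgroup.zpowers g)).r x y →
        Quot.mk r (e.symm x) = Quot.mk r (e.symm y) := by
      intro x y hxy
      rw [QuotientGroup.leftRel_apply] at hxy
      rcases hzmem _ hxy with h1 | h1
      · have hyx : x = y := inv_mul_eq_one.mp h1
        rw [hyx]
      · have hy : y = x * g := by
          rw [← h1, ← mul_assoc, mul_inv_cancel, one_mul]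
        apply Quot.sound
        show (e.symm x).1 = (e.symm y).1 ∨ (e.symm x).1 = -(e.symm y).1
        right
        show (x : (ZMod (2 * k))ˣ) = -((y : ↥K) : (ZMod (2 * k))ˣ)
        rw [hy]
        show (x : (ZMod (2 * k))ˣ) = -((x : (ZMod (2 * k))ˣ) * (-1))
        rw [mul_neg_one, neg_neg]
    have cardQ : Nat.card (Quot r) = Nat.card (↥K ⧸ Subgroup.zpowers g) := by
      apply Nat.card_congr
      exact {
        toFun := Quot.lift (fun u => (QuotientGroup.mk (e u) : ↥K ⧸ Subgroup.zpowers g)) hFsound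
        invFun := fun q => Quotient.liftOn' q (fun x => Quot.mk r (e.symm x)) hGsound
        left_inv := fun q => Quot.inductionOn q (fun u => by
          show Quot.mk r (e.symm (e u)) = Quot.mk r u
          rw [Equiv.symm_apply_apply])
        right_inv := fun q => Quotient.inductionOn' q (fun x => by
          show (QuotientGroup.mk (e (e.symm x)) : ↥K ⧸ Subgroup.zpowers g) = _
          rw [Equiv.apply_symm_apply]) }
    -- final arithmetic
    have hcard1 : Nat.card ↥H = Nat.card (↥H ⧸ f.ker) * Nat.card f.ker :=
      Subgroup.card_eq_card_quotient_mul_card_subgroup f.ker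
    have hquot : Nat.card (↥H ⧸ f.ker) = Nat.card ↥K :=
      Nat.card_congr (QuotientGroup.quotientKerEquivRange f).toEquiv
    have hcard2 : Nat.card ↥K =
        Nat.card (↥K ⧸ Subgroup.zpowers g) * Nat.card (Subgroup.zpowers g) :=
      Subgroup.card_eq_card_quotient_mul_card_subgroup _
    have hω : 1 ≤ k.primeFactors.card :=
      Finset.card_pos.mpr (Nat.nonempty_primeFactors.mpr (by omega))
    have hsq : sqOneCard (4 * k) = 2 * 2 ^ k.primeFactors.card := sqOneCard_four_mul (by omega)
    rw [cardKer, hquot] at hcard1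
    rw [cardZ, ← cardQ] at hcard2
    rw [hcard2] at hcard1
    rw [cardH, hsq] at hcard1
    have hpow : 2 ^ k.primeFactors.card = 2 ^ (k.primeFactors.card - 1) * 2 := by
      rw [← pow_succ]; congr 1; omega
    rw [hpow] at hcard1
    omega
end

section
/- Let Λ̃ be an even unimodular lattice, v ∈ Λ̃ with v² ≠ 0, and g an isometry of v^⊥ that acts as ±id on the discriminant group of v^⊥. Then g extends to an isometry g̃ of Λ̃ with g̃(v) = ±v (sign matching the action on the discriminant group) and g̃|_{v^⊥} = g. -/
/-!
An element `m` of `M` is determined by its pairings with `v` and with `v^⊥ = ι K`: indeed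
`B v v • m - B v m • v` lies in `v^⊥`, `B v v ≠ 0`, and `B` is nondegenerate. The condition on the
discriminant group says precisely that the pairing data `(f ∘ g⁻¹, ε a)` obtained from the pairing
data `(f, a)` of any `m` is again the pairing data of an element, namely of `ε • m + ι y`. Since the
pairing map is injective, this defines a linear map `g̃` with `g̃ ∘ ι = ι ∘ g` and `g̃ v = ε • v`, and
the same argument shows that `g̃` is an isometry. The same construction for `g⁻¹` inverts `g̃`.
-/

open LinearMap

section

variable {R M N P : Type*} [CommRing R] [AddCommGroup M] [Module R M]
  [AddCommGroup N] [Module R N] [AddCommGroup P] [Module R P]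

theorem LinearMap.exists_comp_eq_of_range_le {φ : M →ₗ[R] N} (hφ : Function.Injective φ)
    {L : P →ₗ[R] N} (h : range L ≤ range φ) : ∃ F : P →ₗ[R] M, φ ∘ₗ F = L :=
  ⟨(LinearEquiv.ofInjective φ hφ).symm ∘ₗ Submodule.inclusion h ∘ₗ L.rangeRestrict, by
    ext p
    simp⟩

end

section

variable {R M K : Type*} [CommRing R] [AddCommGroup M] [Module R M]
  [AddCommGroup K] [Module R K] {B : M →ₗ[R] M →ₗ[R] R} {v : M} {ι : K →ₗ[R] M}

theorem smul_sub_smul_mem_range (hrange : range ι = ker (B v)) (m : M) :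
    B v v • m - B v m • v ∈ range ι := by
  rw [hrange, mem_ker, map_sub, map_smul, map_smul, smul_eq_mul, smul_eq_mul, mul_comm, sub_self]

theorem apply_ι_eq_zero (hrange : range ι = ker (B v)) (x : K) : B v (ι x) = 0 := by
  rw [← mem_ker, ← hrange]
  exact mem_range_self ι x

def IsScalarOnDisc (B : M →ₗ[R] M →ₗ[R] R) (ι : K →ₗ[R] M) (g : K ≃ₗ[R] K) (ε : R) : Prop :=
  ∀ f : K →ₗ[R] R, ∃ y : K, ∀ x : K, f (g.symm x) - ε * f x = B (ι y) (ι x)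

theorem IsScalarOnDisc.symm {g : K ≃ₗ[R] K} {ε : R} (hdisc : IsScalarOnDisc B ι g ε)
    (hε : ε * ε = 1) : IsScalarOnDisc B ι g.symm ε := by
  intro f
  obtain ⟨y, hy⟩ := hdisc (f ∘ₗ g.toLinearMap)
  refine ⟨-ε • y, fun x => ?_⟩
  have := hy x
  simp only [comp_apply, LinearEquiv.coe_coe, g.apply_symm_apply] at this
  rw [map_smul, map_smul, LinearMap.smul_apply, smul_eq_mul, ← this, LinearEquiv.symm_symm]
  linear_combination (-f (g x)) * hε

variable [IsDomain R]

theorem ext_of_perp (hv : B v v ≠ 0) (hrange : range ι = ker (B v)) {f f' : M →ₗ[R] R}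
    (hfv : f v = f' v) (hfι : ∀ x, f (ι x) = f' (ι x)) : f = f' := by
  ext m
  obtain ⟨x, hx⟩ := smul_sub_smul_mem_range hrange m
  have key : f (B v v • m - B v m • v) = f' (B v v • m - B v m • v) := hx ▸ hfι x
  simp only [map_sub, map_smul, smul_eq_mul, hfv, sub_left_inj] at key
  exact mul_left_cancel₀ hv key

theorem eq_of_perp (hinj : Function.Injective B) (hv : B v v ≠ 0)
    (hrange : range ι = ker (B v)) {z z' : M}
    (hzv : B z v = B z' v) (hzι : ∀ x, B z (ι x) = B z' (ι x)) : z = z' :=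
  hinj (ext_of_perp hv hrange hzv hzι)

def IsPairingLift (B : M →ₗ[R] M →ₗ[R] R) (ι : K →ₗ[R] M) (v : M) (g : K ≃ₗ[R] K) (ε : R)
    (F : M →ₗ[R] M) : Prop :=
  ∀ m, (∀ x, B (F m) (ι (g x)) = B m (ι x)) ∧ B (F m) v = ε * B m v

theorem exists_isPairingLift (hsymm : ∀ x y, B x y = B y x) (hinj : Function.Injective B)
    (hv : B v v ≠ 0) (hrange : range ι = ker (B v)) {g : K ≃ₗ[R] K} {ε : R}
    (hdisc : IsScalarOnDisc B ι g ε) : ∃ F, IsPairingLift B ι v g ε F := by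
  let φ : M →ₗ[R] (K →ₗ[R] R) × R := (B.compl₂ ι).prod (B.flip v)
  let L : M →ₗ[R] (K →ₗ[R] R) × R := (B.compl₂ (ι ∘ₗ g.symm.toLinearMap)).prod (ε • B.flip v)
  have hφ : Function.Injective φ := fun z z' h =>
    eq_of_perp hinj hv hrange congr(($h).2) fun x => congr(($h).1 x)
  have hL : range L ≤ range φ := by
    rintro _ ⟨m, rfl⟩
    obtain ⟨y, hy⟩ := hdisc (B.compl₂ ι m)
    have hyv : B (ι y) v = 0 := by rw [hsymm, apply_ι_eq_zero hrange]
    refine ⟨ε • m + ι y, Prod.ext (LinearMap.ext fun x => ?_) ?_⟩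
    · simp [φ, L, ← hy]
    · simp [φ, L, hyv]
  obtain ⟨F, hF⟩ := exists_comp_eq_of_range_le hφ hL
  refine ⟨F, fun m => ⟨fun x => ?_, ?_⟩⟩
  · simpa [φ, L] using congr(($hF m).1 (g x))
  · simpa [φ, L] using congr(($hF m).2)

namespace IsPairingLift

variable {g : K ≃ₗ[R] K} {ε : R} {F : M →ₗ[R] M}

theorem map_ι (hF : IsPairingLift B ι v g ε F) (hsymm : ∀ x y, B x y = B y x)
    (hinj : Function.Injective B) (hv : B v v ≠ 0) (hrange : range ι = ker (B v))
    (hg : ∀ x y : K, B (ι (g x)) (ι (g y)) = B (ι x) (ι y)) (x : K) : F (ι x) = ι (g x) := by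
  refine eq_of_perp hinj hv hrange ?_ fun y => ?_
  · rw [(hF _).2, hsymm, hsymm _ v, apply_ι_eq_zero hrange, apply_ι_eq_zero hrange, mul_zero]
  · rw [← g.apply_symm_apply y, (hF _).1, hg]

theorem map_self (hF : IsPairingLift B ι v g ε F) (hinj : Function.Injective B)
    (hv : B v v ≠ 0) (hrange : range ι = ker (B v)) : F v = ε • v := by
  refine eq_of_perp hinj hv hrange ?_ fun y => ?_
  · rw [(hF v).2, map_smul, LinearMap.smul_apply, smul_eq_mul]
  · rw [← g.apply_symm_apply y, (hF v).1, map_smul, LinearMap.smul_apply, smul_eq_mul,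
      apply_ι_eq_zero hrange, apply_ι_eq_zero hrange, mul_zero]

theorem isometry (hF : IsPairingLift B ι v g ε F) (hv : B v v ≠ 0)
    (hrange : range ι = ker (B v)) (hε : ε * ε = 1) (hFι : ∀ x, F (ι x) = ι (g x))
    (hFv : F v = ε • v) (m n : M) : B (F m) (F n) = B m n := by
  suffices B (F m) ∘ₗ F = B m from congr($this n)
  refine ext_of_perp hv hrange ?_ fun x => ?_
  · rw [comp_apply, hFv, map_smul, smul_eq_mul, (hF m).2, ← mul_assoc, hε, one_mul]
  · rw [comp_apply, hFι, (hF m).1]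

theorem comp (hF : IsPairingLift B ι v g ε F) {G : M →ₗ[R] M}
    (hG : IsPairingLift B ι v g.symm ε G) (hinj : Function.Injective B) (hv : B v v ≠ 0)
    (hrange : range ι = ker (B v)) (hε : ε * ε = 1) : G ∘ₗ F = LinearMap.id := by
  ext m
  refine eq_of_perp hinj hv hrange ?_ fun x => ?_
  · rw [comp_apply, (hG _).2, (hF m).2, ← mul_assoc, hε, one_mul, id_apply]
  · rw [comp_apply, ← g.symm_apply_apply x, (hG _).1, (hF m).1, id_apply, g.symm_apply_apply]

end IsPairingLift

end

theorem isometry_of_perp_extends_general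
    {M : Type*} [AddCommGroup M] [Module ℤ M]
    (B : M →ₗ[ℤ] M →ₗ[ℤ] ℤ)
    (hsymm : ∀ x y, B x y = B y x)
    (hunimod : Function.Bijective (B : M → M →ₗ[ℤ] ℤ))
    (v : M) (hv : B v v ≠ 0)
    (K : Type*) [AddCommGroup K] [Module ℤ K]
    (ι : K →ₗ[ℤ] M)
    (hrange : LinearMap.range ι = LinearMap.ker (B v))
    (g : K ≃ₗ[ℤ] K)
    (hg : ∀ x y : K, B (ι (g x)) (ι (g y)) = B (ι x) (ι y))
    (ε : ℤ) (hε : ε = 1 ∨ ε = -1)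
    (hdisc : ∀ f : K →ₗ[ℤ] ℤ, ∃ y : K,
      ∀ x : K, f (g.symm x) - ε * f x = B (ι y) (ι x)) :
    ∃ g' : M ≃ₗ[ℤ] M,
      (∀ x y, B (g' x) (g' y) = B x y) ∧
      g' v = ε • v ∧
      (∀ x : K, g' (ι x) = ι (g x)) := by
  have hε2 : ε * ε = 1 := by rcases hε with rfl | rfl <;> rfl
  have hinj := hunimod.injective
  obtain ⟨F, hF⟩ := exists_isPairingLift hsymm hinj hv hrange (g := g) hdisc
  obtain ⟨G, hG⟩ := exists_isPairingLift hsymm hinj hv hrange (IsScalarOnDisc.symm hdisc hε2)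
  have hFι := hF.map_ι hsymm hinj hv hrange hg
  have hFv := hF.map_self hinj hv hrange
  -- `ε • v` in the conclusion is `zsmul`, not a priori the action of the given `Module ℤ M`
  refine ⟨.ofLinearMap F G (hG.comp hF hinj hv hrange hε2) (hF.comp hG hinj hv hrange hε2),
    hF.isometry hv hrange hε2 hFι hFv, hFv.trans (int_smul_eq_zsmul _ ε v), hFι⟩

/-- let `Λ̃` be an even unimodular lattice, `v ∈ Λ̃` with `v² ≠ 0`, and
`g` an isometry of `v^⊥` acting as `ε·id` (`ε = ±1`) on the discriminant group of
`v^⊥`. Then `g` extends to an isometry `g̃` of `Λ̃` with `g̃(v) = ε·v` and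
`g̃|_{v^⊥} = g`. Here `v^⊥` is presented as a ℤ-module `K` with an injective linear
map `ι` onto `{x : B v x = 0}`, and "acts as `ε·id` on the discriminant group" means
that for every `f ∈ (v^⊥)*` the functional `f ∘ g⁻¹ − ε·f` lies in the image of
`v^⊥` in its dual. -/
theorem isometry_of_perp_extends
    {M : Type*} [AddCommGroup M] [Module ℤ M] [Module.Free ℤ M] [Module.Finite ℤ M]
    (B : M →ₗ[ℤ] M →ₗ[ℤ] ℤ)
    (hsymm : ∀ x y, B x y = B y x)
    (heven : ∀ x, Even (B x x))
    (hunimod : Function.Bijective (B : M → M →ₗ[ℤ] ℤ))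
    (v : M) (hv : B v v ≠ 0)
    (K : Type*) [AddCommGroup K] [Module ℤ K]
    (ι : K →ₗ[ℤ] M) (hι : Function.Injective ι)
    (hrange : LinearMap.range ι = LinearMap.ker (B v))
    (g : K ≃ₗ[ℤ] K)
    (hg : ∀ x y : K, B (ι (g x)) (ι (g y)) = B (ι x) (ι y))
    (ε : ℤ) (hε : ε = 1 ∨ ε = -1)
    (hdisc : ∀ f : K →ₗ[ℤ] ℤ, ∃ y : K,
      ∀ x : K, f (g.symm x) - ε * f x = B (ι y) (ι x)) :
    ∃ g' : M ≃ₗ[ℤ] M,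
      (∀ x y, B (g' x) (g' y) = B x y) ∧
      g' v = ε • v ∧
      (∀ x : K, g' (ι x) = ι (g x)) :=
  isometry_of_perp_extends_general B hsymm hunimod v hv K ι hrange g hg ε hε hdisc
end
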